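/- arXiv:2503.17152 — 3 statements merged into one kernel-verified Lean document; each statement's English description precedes it below -/
import Mathlib

section
/- Let q be a prime power with q - 1 = 4k + R for some k ≥ 1 and R ∈ {1,...,5}. Then the mixed graph H_q is totally regular with parameters [k, q]: every vertex has exactly q incident edges, exactly k out-going arcs, and exactly k in-coming arcs. -/
open Sum

/-- Vertices of `H_q` (= vertices of `G_q`): points `(x,y)` with `x ∈ F*`, points `P_m`,
lines `[m,b]` with `m ∈ F*`, and lines `L_x`. -/
abbrev Vtx (F : Type) [Field F] : Type := (Fˣ × F ⊕ Fˣ) ⊕ (Fˣ × F ⊕ Fˣ)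

/-- Edges of `G_q ⊆ H_q`: `(x,y) ~ [m,b]` iff `y = m x + b`; `(x,y) ~ L_x`;
`[m,b] ~ P_m`. -/
def HEdge {F : Type} [Field F] : Vtx F → Vtx F → Prop
  | inl (inl (x, y)), inr (inl (m, b)) => y = (m : F) * x + b
  | inr (inl (m, b)), inl (inl (x, y)) => y = (m : F) * x + b
  | inl (inl (x, _)), inr (inr x') => x = x'
  | inr (inr x'), inl (inl (x, _)) => x = x'
  | inl (inr m), inr (inl (m', _)) => m = m'
  | inr (inl (m', _)), inl (inr m) => m = m'
  | _, _ => False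

/-- Arcs of `H_q`, given a primitive element `ξ` and jumps `i ∈ {1,…,k}`:
`((x,y),(xξ^i,y))`, `(L_x, L_{xξ^i})`, `([m,b],[m/ξ^i,b])`, `(P_m, P_{m/ξ^i})`. -/
def HArc {F : Type} [Field F] (ξ : Fˣ) (k : ℕ) : Vtx F → Vtx F → Prop
  | inl (inl (x, y)), inl (inl (x', y')) =>
      y = y' ∧ ∃ i : ℕ, 1 ≤ i ∧ i ≤ k ∧ x' = x * ξ ^ i
  | inr (inr x), inr (inr x') => ∃ i : ℕ, 1 ≤ i ∧ i ≤ k ∧ x' = x * ξ ^ i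
  | inr (inl (m, b)), inr (inl (m', b')) =>
      b = b' ∧ ∃ i : ℕ, 1 ≤ i ∧ i ≤ k ∧ m' = m * (ξ ^ i)⁻¹
  | inl (inr m), inl (inr m') => ∃ i : ℕ, 1 ≤ i ∧ i ≤ k ∧ m' = m * (ξ ^ i)⁻¹
  | _, _ => False

/-- A mixed cycle of length `ℓ` in `H_q`: an injective cyclic sequence of vertices where
each step is an arc (traversed forwards) or an edge; a closed walk of length 2 using the
same edge twice is not a cycle. -/
def IsMixedCycle {F : Type} [Field F] (ξ : Fˣ) (k ℓ : ℕ) (f : ZMod ℓ → Vtx F) : Prop :=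
  Function.Injective f ∧
    ∃ s : ZMod ℓ → Bool,
      (∀ t : ZMod ℓ, if s t then HArc ξ k (f t) (f (t + 1)) else HEdge (f t) (f (t + 1))) ∧
      (ℓ = 2 → s 0 = true ∨ s 1 = true)

/-! Every neighbourhood is parametrised explicitly. The edge-neighbours of a vertex are in
bijection with `F`: for a point `(x, y)` they are `L_x` and the lines `[m, y - m x]`, `m ∈ F*`,
and dually for `[m, b]`. The arc-out-neighbours are the translates of the coordinate by
`ξ ^ i` (or `ξ ^ (-i)`) for `1 ≤ i ≤ k`, which are distinct since `ξ` has order `q - 1 > k`.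
Reversing all arcs is the same as replacing `ξ` by `ξ⁻¹`, which gives the in-degrees. -/

section MulPowIcc

variable {G : Type*} [Group G]

def mulPowIcc (a g : G) (k : ℕ) : Set G := {h | ∃ i, 1 ≤ i ∧ i ≤ k ∧ h = a * g ^ i}

@[simp]
lemma mem_mulPowIcc {a g h : G} {k : ℕ} :
    h ∈ mulPowIcc a g k ↔ ∃ i, 1 ≤ i ∧ i ≤ k ∧ h = a * g ^ i :=
  Iff.rfl

lemma mulPowIcc_eq_image (a g : G) (k : ℕ) :
    mulPowIcc a g k = (fun i => a * g ^ i) '' Set.Icc 1 k := by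
  ext h
  simp only [mem_mulPowIcc, Set.mem_image, Set.mem_Icc, and_assoc, eq_comm]

lemma Nat.card_mulPowIcc (a g : G) {k : ℕ} (hk : k < orderOf g) :
    Nat.card (mulPowIcc a g k) = k := by
  have hinj : (Set.Icc 1 k).InjOn (fun i => a * g ^ i) := fun i hi j hj hij =>
    pow_injOn_Iio_orderOf (lt_of_le_of_lt hi.2 hk) (lt_of_le_of_lt hj.2 hk)
      (mul_left_cancel hij)
  rw [mulPowIcc_eq_image, Nat.card_image_of_injOn hinj]
  simp

end MulPowIcc

lemma Nat.card_option_units (G₀ : Type*) [GroupWithZero G₀] :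
    Nat.card (Option G₀ˣ) = Nat.card G₀ := by
  classical
  exact Nat.card_congr (unitsEquivNeZero.optionCongr.trans (Equiv.optionSubtypeNe 0))

lemma Nat.card_subtype_of_eq_range {α β : Type*} {P : α → Prop} {f : β → α}
    (hf : f.Injective) (h : ∀ a, P a ↔ a ∈ Set.range f) : Nat.card {a // P a} = Nat.card β :=
  (Nat.card_congr (Equiv.subtypeEquivRight h)).trans (Nat.card_range_of_injective hf)

lemma Nat.card_subtype_of_eq_image {α β : Type*} {P : α → Prop} {f : β → α}
    (hf : f.Injective) {s : Set β} (h : ∀ a, P a ↔ a ∈ f '' s) :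
    Nat.card {a // P a} = Nat.card s :=
  (Nat.card_congr (Equiv.subtypeEquivRight h)).trans (Nat.card_image_of_injective hf s)

section Degrees

variable {F : Type} [Field F]

lemma Nat.card_HEdge (v : Vtx F) : Nat.card {w // HEdge v w} = Nat.card F := by
  rcases v with ((⟨x, y⟩ | m) | (⟨m, b⟩ | x))
  · rw [← Nat.card_option_units F]
    refine Nat.card_subtype_of_eq_range
      (f := fun o => o.elim (inr (inr x)) fun m => inr (inl (m, y - m * x)))
      (by rintro (_ | m) (_ | m') h <;> simp_all) ?_
    rintro ((⟨x', y'⟩ | m') | (⟨m', b'⟩ | x')) <;>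
      simp [HEdge, Option.exists, eq_sub_iff_add_eq, eq_comm, add_comm]
  · refine Nat.card_subtype_of_eq_range (f := fun b => inr (inl (m, b)))
      (fun b b' h => by simpa using h) ?_
    rintro ((⟨x', y'⟩ | m') | (⟨m', b'⟩ | x')) <;> simp [HEdge, eq_comm]
  · rw [← Nat.card_option_units F]
    refine Nat.card_subtype_of_eq_range
      (f := fun o => o.elim (inl (inr m)) fun x => inl (inl (x, m * x + b)))
      (by rintro (_ | x) (_ | x') h <;> simp_all) ?_
    rintro ((⟨x', y'⟩ | m') | (⟨m', b'⟩ | x')) <;> simp [HEdge, Option.exists, eq_comm]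
  · refine Nat.card_subtype_of_eq_range (f := fun y => inl (inl (x, y)))
      (fun y y' h => by simpa using h) ?_
    rintro ((⟨x', y'⟩ | m') | (⟨m', b'⟩ | x')) <;> simp [HEdge, eq_comm]

lemma HArc_inv_iff (ξ : Fˣ) (k : ℕ) {v w : Vtx F} : HArc ξ⁻¹ k v w ↔ HArc ξ k w v := by
  rcases v with ((⟨x, y⟩ | m) | (⟨m, b⟩ | x)) <;>
    rcases w with ((⟨x', y'⟩ | m') | (⟨m', b'⟩ | x')) <;>
    simp [HArc, inv_pow, eq_mul_inv_iff_mul_eq, eq_comm]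

lemma Nat.card_HArc {ξ : Fˣ} {k : ℕ} (hk : k < orderOf ξ) (v : Vtx F) :
    Nat.card {w // HArc ξ k v w} = k := by
  have hk' : k < orderOf ξ⁻¹ := by rwa [orderOf_inv]
  rcases v with ((⟨x, y⟩ | m) | (⟨m, b⟩ | x))
  · refine (Nat.card_subtype_of_eq_image (f := fun x' => inl (inl (x', y)))
      (fun _ _ h => by simpa using h) ?_).trans (Nat.card_mulPowIcc x ξ hk)
    rintro ((⟨x', y'⟩ | m') | (⟨m', b'⟩ | x')) <;> simp [HArc, eq_comm, and_comm, and_assoc]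
  · refine (Nat.card_subtype_of_eq_image (f := fun m' => inl (inr m'))
      (fun _ _ h => by simpa using h) ?_).trans (Nat.card_mulPowIcc m ξ⁻¹ hk')
    rintro ((⟨x', y'⟩ | m') | (⟨m', b'⟩ | x')) <;> simp [HArc, inv_pow]
  · refine (Nat.card_subtype_of_eq_image (f := fun m' => inr (inl (m', b)))
      (fun _ _ h => by simpa using h) ?_).trans (Nat.card_mulPowIcc m ξ⁻¹ hk')
    rintro ((⟨x', y'⟩ | m') | (⟨m', b'⟩ | x')) <;>
      simp [HArc, inv_pow, eq_comm, and_comm, and_assoc]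
  · refine (Nat.card_subtype_of_eq_image (f := fun x' => inr (inr x'))
      (fun _ _ h => by simpa using h) ?_).trans (Nat.card_mulPowIcc x ξ hk)
    rintro ((⟨x', y'⟩ | m') | (⟨m', b'⟩ | x')) <;> simp [HArc]

lemma Nat.card_HArc_rev {ξ : Fˣ} {k : ℕ} (hk : k < orderOf ξ) (v : Vtx F) :
    Nat.card {w // HArc ξ k w v} = k :=
  (Nat.card_congr (Equiv.subtypeEquivRight fun _ => (HArc_inv_iff ξ k).symm)).trans
    (Nat.card_HArc (by rwa [orderOf_inv]) v)

end Degrees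

theorem Hq_totally_regular_general (q k R : ℕ)
    (F : Type) [Field F] [Fintype F] (hcard : Fintype.card F = q)
    (ξ : Fˣ) (hξ : ∀ a : Fˣ, a ∈ Subgroup.zpowers ξ)
    (hR1 : 1 ≤ R) (hqk : q - 1 = 4 * k + R) :
    ∀ v : Vtx F,
      Nat.card {w : Vtx F // HEdge v w} = q ∧
      Nat.card {w : Vtx F // HArc ξ k v w} = k ∧
      Nat.card {w : Vtx F // HArc ξ k w v} = k := by
  have hord : orderOf ξ = q - 1 := by
    rw [orderOf_eq_card_of_forall_mem_zpowers hξ, Nat.card_units, Nat.card_eq_fintype_card,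
      hcard]
  have hk : k < orderOf ξ := by omega
  intro v
  refine ⟨?_, Nat.card_HArc hk v, Nat.card_HArc_rev hk v⟩
  rw [Nat.card_HEdge, Nat.card_eq_fintype_card, hcard]

/-- `H_q` is a totally regular mixed graph with parameters `[k, q]`: every vertex has
exactly `q` incident edges, `k` out-going arcs and `k` in-coming arcs. -/
theorem Hq_totally_regular (q k R : ℕ) (hq : IsPrimePow q)
    (F : Type) [Field F] [Fintype F] (hcard : Fintype.card F = q)
    (ξ : Fˣ) (hξ : ∀ a : Fˣ, a ∈ Subgroup.zpowers ξ)
    (hk : 1 ≤ k) (hR1 : 1 ≤ R) (hR5 : R ≤ 5) (hqk : q - 1 = 4 * k + R) :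
    ∀ v : Vtx F,
      Nat.card {w : Vtx F // HEdge v w} = q ∧
      Nat.card {w : Vtx F // HArc ξ k v w} = k ∧
      Nat.card {w : Vtx F // HArc ξ k w v} = k :=
  Hq_totally_regular_general q k R F hcard ξ hξ hR1 hqk
end

section
/- Let q be a prime power with q-1 = 4k + R, R ∈ {1,...,5}, k ≥ 1. In H_q there is no mixed cycle of length 3: in particular, for any part L_b and any point vertex v, v is edge-adjacent to at most one vertex of L_b, so v together with two arc-adjacent lines of L_b cannot form a 3-cycle; and there is no cycle using two arcs and one edge since the two endpoints of an edge lie in different parts while arcs stay within one part. -/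
open Sum

/-!
Arcs stay inside a part and multiply a unit coordinate by `ξ ^ i` with `1 ≤ i ≤ k`, while
edges join a point to a line and form a matching between any two parts. Hence three arcs would
give `ξ ^ n = 1` with `3 ≤ n ≤ 3k < q - 1`; two arcs and an edge would put an edge inside one
part; one arc and two edges would give a vertex two neighbours in one part; and three edges
would be an odd cycle in the bipartite graph `G_q`.
-/

section

variable {F : Type} [Field F]

/-- The part of `H_q` containing a vertex: `inl (some y)`, `inl none`, `inr (some b)`, `inr none`
stand for `P_y`, `P_∞`, `L_b`, `L_∞`. -/
def Vtx.part : Vtx F → Option F ⊕ Option F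
  | inl (inl (_, y)) => inl (some y)
  | inl (inr _) => inl none
  | inr (inl (_, b)) => inr (some b)
  | inr (inr _) => inr none

/-- Lines are coordinatised by `m⁻¹` so that arcs in every part multiply by `ξ ^ i`. -/
def Vtx.unitCoord : Vtx F → Fˣ
  | inl (inl (x, _)) => x
  | inl (inr m) => m⁻¹
  | inr (inl (m, _)) => m⁻¹
  | inr (inr x) => x

theorem Vtx.isLeft_part (u : Vtx F) : u.part.isLeft = u.isLeft := by
  rcases u with (_ | _) | (_ | _) <;> rfl

theorem HEdge.symm {u v : Vtx F} (h : HEdge u v) : HEdge v u := by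
  rcases u with (_ | _) | (_ | _) <;> rcases v with (_ | _) | (_ | _) <;> exact h

theorem HEdge.isLeft_ne {u v : Vtx F} (h : HEdge u v) : u.isLeft ≠ v.isLeft := by
  rcases u with (_ | _) | (_ | _) <;> rcases v with (_ | _) | (_ | _) <;>
    simp_all [HEdge]

theorem HEdge.part_ne {u v : Vtx F} (h : HEdge u v) : u.part ≠ v.part := fun hp =>
  h.isLeft_ne (by rw [← u.isLeft_part, hp, v.isLeft_part])

theorem HEdge.eq_of_part_eq {w u v : Vtx F} (hu : HEdge w u) (hv : HEdge w v)
    (hp : u.part = v.part) : u = v := by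
  rcases w with (⟨x, y⟩ | m) | (⟨m, b⟩ | x) <;>
  rcases u with (⟨x₁, y₁⟩ | m₁) | (⟨m₁, b₁⟩ | x₁) <;>
  rcases v with (⟨x₂, y₂⟩ | m₂) | (⟨m₂, b₂⟩ | x₂) <;>
  simp only [HEdge, Vtx.part, inl.injEq, inr.injEq, Option.some.injEq, reduceCtorEq] at hu hv hp ⊢
  all_goals subst_vars
  all_goals first | rfl | simp_all [Units.ext_iff]

theorem HArc.part_eq {ξ : Fˣ} {k : ℕ} {u v : Vtx F} (h : HArc ξ k u v) : u.part = v.part := by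
  rcases u with (_ | _) | (_ | _) <;> rcases v with (_ | _) | (_ | _) <;>
    simp_all [HArc, Vtx.part]

theorem HArc.exists_unitCoord_eq {ξ : Fˣ} {k : ℕ} {u v : Vtx F} (h : HArc ξ k u v) :
    ∃ i, 1 ≤ i ∧ i ≤ k ∧ v.unitCoord = u.unitCoord * ξ ^ i := by
  rcases u with (⟨x, y⟩ | m) | (⟨m, b⟩ | x) <;> rcases v with (⟨x', y'⟩ | m') | (⟨m', b'⟩ | x') <;>
    simp only [HArc] at h
  · obtain ⟨-, i, hi, hik, rfl⟩ := h
    exact ⟨i, hi, hik, rfl⟩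
  · obtain ⟨i, hi, hik, rfl⟩ := h
    exact ⟨i, hi, hik, by simp [Vtx.unitCoord, mul_comm]⟩
  · obtain ⟨-, i, hi, hik, rfl⟩ := h
    exact ⟨i, hi, hik, by simp [Vtx.unitCoord, mul_comm]⟩
  · obtain ⟨i, hi, hik, rfl⟩ := h
    exact ⟨i, hi, hik, rfl⟩

theorem not_harc_triangle {ξ : Fˣ} {k : ℕ} (hk : 3 * k < orderOf ξ) {u v w : Vtx F}
    (huv : HArc ξ k u v) (hvw : HArc ξ k v w) (hwu : HArc ξ k w u) : False := by
  obtain ⟨i, hi, hik, hv⟩ := huv.exists_unitCoord_eq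
  obtain ⟨j, hj, hjk, hw⟩ := hvw.exists_unitCoord_eq
  obtain ⟨l, hl, hlk, hu⟩ := hwu.exists_unitCoord_eq
  refine pow_ne_one_of_lt_orderOf (x := ξ) (n := i + j + l) (by omega) (by omega) ?_
  rw [← mul_eq_left (a := u.unitCoord), pow_add, pow_add, ← mul_assoc, ← mul_assoc, ← hv, ← hw,
    ← hu]

theorem not_mixed_triangle {ξ : Fˣ} {k : ℕ} (hk : 3 * k < orderOf ξ) {u v w : Vtx F}
    (huv : u ≠ v) (hvw : v ≠ w) (hwu : w ≠ u) {a b c : Bool}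
    (h₁ : if a then HArc ξ k u v else HEdge u v) (h₂ : if b then HArc ξ k v w else HEdge v w)
    (h₃ : if c then HArc ξ k w u else HEdge w u) : False := by
  cases a <;> cases b <;> cases c <;> simp only [Bool.false_eq_true, if_true, if_false] at h₁ h₂ h₃
  · have := h₁.isLeft_ne; have := h₂.isLeft_ne; have := h₃.isLeft_ne
    grind
  · exact hwu (h₂.eq_of_part_eq h₁.symm h₃.part_eq)
  · exact hvw (h₁.eq_of_part_eq h₃.symm h₂.part_eq)
  · exact h₁.part_ne (h₂.part_eq.trans h₃.part_eq).symm
  · exact huv (h₃.eq_of_part_eq h₂.symm h₁.part_eq)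
  · exact h₂.part_ne (h₁.part_eq.symm.trans h₃.part_eq.symm)
  · exact h₃.part_ne (h₁.part_eq.trans h₂.part_eq).symm
  · exact not_harc_triangle hk h₁ h₂ h₃

end

theorem Hq_no_three_cycle_general (q k R : ℕ)
    (F : Type) [Field F] [Fintype F] (hcard : Fintype.card F = q)
    (ξ : Fˣ) (hξ : ∀ a : Fˣ, a ∈ Subgroup.zpowers ξ)
    (hqk : q - 1 = 4 * k + R) :
    ∀ f : ZMod 3 → Vtx F, ¬ IsMixedCycle ξ k 3 f := by
  rintro f ⟨hinj, s, hstep, -⟩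
  have hord : orderOf ξ = 4 * k + R := by
    rw [orderOf_eq_card_of_forall_mem_zpowers hξ, Nat.card_units, Nat.card_eq_fintype_card, hcard,
      hqk]
  have h3k : 3 * k < orderOf ξ := by
    have := orderOf_pos ξ
    omega
  exact not_mixed_triangle h3k (hinj.ne (by decide)) (hinj.ne (by decide)) (hinj.ne (by decide))
    (hstep 0) (hstep 1) (hstep 2)

/-- `H_q` has no mixed cycle of length 3. -/
theorem Hq_no_three_cycle (q k R : ℕ) (hq : IsPrimePow q) (hq7 : 7 ≤ q)
    (F : Type) [Field F] [Fintype F] (hcard : Fintype.card F = q)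
    (ξ : Fˣ) (hξ : ∀ a : Fˣ, a ∈ Subgroup.zpowers ξ)
    (hk : 1 ≤ k) (hR1 : 1 ≤ R) (hR5 : R ≤ 5) (hqk : q - 1 = 4 * k + R) :
    ∀ f : ZMod 3 → Vtx F, ¬ IsMixedCycle ξ k 3 f :=
  Hq_no_three_cycle_general q k R F hcard ξ hξ hqk
end

section
/- Let q be a prime power with q - 1 = 4k + R for some R ∈ {1,...,5} and k ≥ 1. Then there exists a [k, q; 5]-mixed graph on 2q² - 2 vertices; consequently, the minimum order n[k,q;5] of a [k,q;5]-mixed cage satisfies n[k,q;5] ≤ 2q² - 2. -/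
/-- A mixed cycle of length `ℓ` in a mixed graph with edge relation `E` and arc relation
`A`: an injective cyclic sequence of vertices where each step is an arc (traversed
forwards) or an edge; a closed walk of length 2 reusing one edge is not a cycle. -/
def IsMixedCycleIn {V : Type} (E A : V → V → Prop) (ℓ : ℕ) (f : ZMod ℓ → V) : Prop :=
  Function.Injective f ∧
    ∃ s : ZMod ℓ → Bool,
      (∀ t : ZMod ℓ, if s t then A (f t) (f (t + 1)) else E (f t) (f (t + 1))) ∧
      (ℓ = 2 → s 0 = true ∨ s 1 = true)

/-- `n ∈ MixedGraphOrders z r g` iff there is a `[z,r;g]`-mixed graph on `n` vertices: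
a simple mixed graph in which every vertex has `r` incident edges, `z` out-arcs and
`z` in-arcs, every mixed cycle has length at least `g`, and some mixed cycle has
length `g`. -/
def MixedGraphOrders (z r g : ℕ) : Set ℕ :=
  {n | ∃ E A : Fin n → Fin n → Prop,
    (∀ u v, E u v → E v u) ∧ (∀ v, ¬ E v v) ∧ (∀ v, ¬ A v v) ∧
    (∀ u v, ¬ (E u v ∧ A u v)) ∧
    (∀ v, Nat.card {w : Fin n // E v w} = r) ∧
    (∀ v, Nat.card {w : Fin n // A v w} = z) ∧
    (∀ v, Nat.card {w : Fin n // A w v} = z) ∧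
    (∀ (ℓ : ℕ) (f : ZMod ℓ → Fin n), IsMixedCycleIn E A ℓ f → g ≤ ℓ) ∧
    (∃ f : ZMod g → Fin n, IsMixedCycleIn E A g f)}

/-!
Model the elliptic semiplane of type L on the affine plane `F²`: its points are the vectors
`x ≠ 0`, its lines are the lines `{x | x ⬝ᵥ φ = 1}` (`φ ≠ 0`) avoiding the origin. The homothety
`x ↦ c • x` (`c ∈ Fˣ`) preserves incidence, acts freely, and its orbits are the `2(q + 1)` parts
(the punctured lines through the origin and the parallel classes of lines). The arcs are
`v → g ^ j • v` for `1 ≤ j ≤ k`, where `g` has order greater than `4k`.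

In a mixed cycle of length at most `4` that uses both arcs and edges, the arcs can be pushed
through the edges until one is left with `a • v ~ w` and `b • w ~ v`; incidence then forces
`a * b = 1`, although `a * b = g ^ J` with `1 ≤ J ≤ 4k`. Cycles of arcs only fail in the same
way by freeness, cycles of odd length contradict bipartiteness, and a `4`-cycle of edges would
give two points on two common lines.
-/

section MixedCycles

open Function

namespace IsMixedCycleIn

variable {V : Type} {E A : V → V → Prop} {ℓ : ℕ} {f : ZMod ℓ → V}

lemma step (h : IsMixedCycleIn E A ℓ f) (t : ZMod ℓ) :
    A (f t) (f (t + 1)) ∨ E (f t) (f (t + 1)) := by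
  obtain ⟨-, s, hs, -⟩ := h
  have := hs t
  split_ifs at this <;> tauto

lemma arc_of_two {f : ZMod 2 → V} (h : IsMixedCycleIn E A 2 f) :
    A (f 0) (f 1) ∨ A (f 1) (f 0) := by
  obtain ⟨-, s, hs, h2⟩ := h
  rcases h2 rfl with h0 | h1
  · exact .inl (by simpa [h0] using hs 0)
  · have h := hs 1
    rw [h1, if_pos rfl] at h
    exact .inr h

end IsMixedCycleIn

lemma isMixedCycleIn_comp_iff {V W : Type} {E A : W → W → Prop} {ℓ : ℕ} {e : V → W}
    (he : Injective e) (f : ZMod ℓ → V) :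
    IsMixedCycleIn (fun a b => E (e a) (e b)) (fun a b => A (e a) (e b)) ℓ f ↔
      IsMixedCycleIn E A ℓ (e ∘ f) := by
  simp only [IsMixedCycleIn, he.of_comp_iff, comp_apply]

theorem natCard_mem_mixedGraphOrders {V : Type} [Finite V] {z r g : ℕ} (E A : V → V → Prop)
    (hE_symm : ∀ u v, E u v → E v u) (hE_irrefl : ∀ v, ¬ E v v) (hA_irrefl : ∀ v, ¬ A v v)
    (hEA : ∀ u v, ¬ (E u v ∧ A u v)) (hE_deg : ∀ v, Nat.card {w // E v w} = r)
    (hA_out : ∀ v, Nat.card {w // A v w} = z) (hA_in : ∀ v, Nat.card {w // A w v} = z)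
    (h_girth : ∀ (ℓ : ℕ) (f : ZMod ℓ → V), IsMixedCycleIn E A ℓ f → g ≤ ℓ)
    (h_cycle : ∃ f : ZMod g → V, IsMixedCycleIn E A g f) :
    Nat.card V ∈ MixedGraphOrders z r g := by
  set e := (Finite.equivFin V).symm
  have hcard {R : V → Prop} : Nat.card {w // R (e w)} = Nat.card {w // R w} :=
    Nat.card_congr (e.subtypeEquiv fun _ => Iff.rfl)
  obtain ⟨f, hf⟩ := h_cycle
  refine ⟨fun a b => E (e a) (e b), fun a b => A (e a) (e b), fun u v => hE_symm _ _,
    fun v => hE_irrefl _, fun v => hA_irrefl _, fun u v => hEA _ _,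
    fun v => hcard.trans (hE_deg _), fun v => hcard.trans (hA_out _),
    fun v => hcard.trans (hA_in _),
    fun ℓ f hf => h_girth ℓ _ ((isMixedCycleIn_comp_iff e.injective f).1 hf),
    e.symm ∘ f, (isMixedCycleIn_comp_iff e.injective _).2 ?_⟩
  simpa [comp_def] using hf

end MixedCycles

section LinearAlgebra

open Function Finset Matrix

lemma eq_or_eq_of_dotProduct_eq_one {F : Type*} [Field F] {a b c d : Fin 2 → F} (hab : a ⬝ᵥ b = 1)
    (hcb : c ⬝ᵥ b = 1) (hcd : c ⬝ᵥ d = 1) (had : a ⬝ᵥ d = 1) : a = c ∨ b = d := by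
  simp only [dotProduct, Fin.sum_univ_two] at hab hcb hcd had
  -- Cauchy–Binet: `det (a, c) * det (b, d) = (a ⬝ᵥ b) (c ⬝ᵥ d) - (a ⬝ᵥ d) (c ⬝ᵥ b) = 0`
  have key : (a 0 * c 1 - a 1 * c 0) * (b 0 * d 1 - b 1 * d 0) = 0 := by
    linear_combination (c 0 * d 0 + c 1 * d 1) * hab + hcd - (c 0 * b 0 + c 1 * b 1) * had - hcb
  rcases mul_eq_zero.1 key with h | h
  · refine .inl (funext (Fin.forall_fin_two.2 ⟨?_, ?_⟩))
    · linear_combination b 1 * h - a 0 * hcb + c 0 * hab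
    · linear_combination -b 0 * h - a 1 * hcb + c 1 * hab
  · refine .inr (funext (Fin.forall_fin_two.2 ⟨?_, ?_⟩))
    · linear_combination a 1 * h - b 0 * had + d 0 * hab
    · linear_combination -a 0 * h - b 1 * had + d 1 * hab

lemma AddMonoidHom.card_fiber_mul_card_of_surjective {G H : Type*} [AddGroup G] [Fintype G]
    [AddGroup H] [Fintype H] [DecidableEq H] (f : G →+ H) (hf : Surjective f) (y : H) :
    #{x | f x = y} * Fintype.card H = Fintype.card G := by
  symm
  calc Fintype.card G = ∑ y', #{x | f x = y'} := card_eq_sum_card_fiberwise (by simp)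
    _ = ∑ _y' : H, #{x | f x = y} :=
      sum_congr rfl fun y' _ => card_fiber_eq_of_mem_range f (hf y') (hf y)
    _ = _ := by simp [mul_comm]

lemma card_dotProduct_eq_mul_card {F ι : Type*} [Field F] [Finite F] [Fintype ι]
    {p : ι → F} (hp : p ≠ 0) (c : F) :
    Nat.card {φ : ι → F // p ⬝ᵥ φ = c} * Nat.card F = Nat.card F ^ Nat.card ι := by
  classical
  have := Fintype.ofFinite F
  obtain ⟨i, hi⟩ := Function.ne_iff.1 hp
  have hsurj : Surjective (AddMonoidHom.mk' (p ⬝ᵥ ·) (dotProduct_add p)) := fun y =>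
    ⟨Pi.single i (y / p i), by simp [dotProduct_single, mul_div_cancel₀ _ hi]⟩
  simp only [Nat.card_eq_fintype_card]
  rw [Fintype.card_subtype, ← Fintype.card_fun,
    ← AddMonoidHom.card_fiber_mul_card_of_surjective _ hsurj c]
  rfl

end LinearAlgebra

namespace SemiplaneGraph

open Function Matrix

variable {F : Type} [Field F]

/-- `inl x` is the point `x` and `inr φ` the line `{x | x ⬝ᵥ φ = 1}` of the affine plane `F²`. -/
abbrev Vertex (F : Type) [Field F] : Type :=
  {x : Fin 2 → F // x ≠ 0} ⊕ {x : Fin 2 → F // x ≠ 0}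

def Edge : Vertex F → Vertex F → Prop
  | .inl p, .inr φ => (p : Fin 2 → F) ⬝ᵥ φ = 1
  | .inr φ, .inl p => (p : Fin 2 → F) ⬝ᵥ φ = 1
  | _, _ => False

/-- The homothety `x ↦ c • x`; it maps the line `{x | x ⬝ᵥ φ = 1}` to `{x | x ⬝ᵥ c⁻¹ • φ = 1}`. -/
def scale (c : Fˣ) : Vertex F → Vertex F := Sum.map (c • ·) (c⁻¹ • ·)

def Arc (g : Fˣ) (k : ℕ) (v w : Vertex F) : Prop := ∃ j ∈ Set.Icc 1 k, w = scale (g ^ j) v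

lemma scale_scale (a b : Fˣ) (v : Vertex F) : scale a (scale b v) = scale (a * b) v := by
  rcases v with p | φ <;> simp [scale, smul_smul, mul_comm]

@[simp] lemma scale_one (v : Vertex F) : scale 1 v = v := by
  rcases v with p | φ <;> simp [scale]

lemma scale_eq_self_iff {c : Fˣ} {v : Vertex F} : scale c v = v ↔ c = 1 := by
  refine ⟨fun h => ?_, by rintro rfl; exact scale_one v⟩
  have fixed {u : Fˣ} {x : {x : Fin 2 → F // x ≠ 0}} (hu : u • x = x) : u = 1 := by
    have hu' : (u : F) • x.1 = (1 : F) • x.1 := by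
      rw [one_smul, ← Units.smul_def]
      exact congrArg Subtype.val hu
    exact Units.val_eq_one.1 ((smul_left_inj x.2).1 hu')
  rcases v with p | φ
  · exact fixed (Sum.inl_injective h)
  · exact inv_eq_one.1 (fixed (Sum.inr_injective h))

@[simp] lemma isLeft_scale (c : Fˣ) (v : Vertex F) : (scale c v).isLeft = v.isLeft := by
  simp [scale]

lemma eq_scale_inv_iff {c : Fˣ} {v w : Vertex F} : w = scale c⁻¹ v ↔ v = scale c w := by
  constructor <;> rintro rfl <;> simp [scale_scale]

namespace Edge

lemma symm {v w : Vertex F} (h : Edge v w) : Edge w v := by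
  rcases v with p | φ <;> rcases w with p' | φ' <;> exact h

lemma isLeft {v w : Vertex F} (h : Edge v w) : w.isLeft = !v.isLeft := by
  rcases v with p | φ <;> rcases w with p' | φ' <;> first | rfl | exact h.elim

lemma isLeft_eq {u v w : Vertex F} (h : Edge u v) (h' : Edge v w) : w.isLeft = u.isLeft := by
  rw [h'.isLeft, h.isLeft, Bool.not_not]

end Edge

lemma not_edge_of_isLeft_eq {v w : Vertex F} (h : w.isLeft = v.isLeft) : ¬ Edge v w :=
  fun e => (Bool.eq_not_self _).1 (h ▸ e.isLeft)

lemma Edge.irrefl (v : Vertex F) : ¬ Edge v v := not_edge_of_isLeft_eq rfl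

lemma not_edge_scale (c : Fˣ) (v : Vertex F) : ¬ Edge (scale c v) v :=
  not_edge_of_isLeft_eq (isLeft_scale c v).symm

lemma mul_eq_one_of_edge_scale {a b : Fˣ} {v w : Vertex F} (h₁ : Edge (scale a v) w)
    (h₂ : Edge (scale b w) v) : a * b = 1 := by
  rcases v with p | φ <;> rcases w with p' | φ' <;>
    simp only [Edge, scale, Sum.map_inl, Sum.map_inr, Units.smul_coe, Units.smul_def,
      smul_dotProduct, dotProduct_smul, smul_eq_mul, Units.val_inv_eq_inv_val] at h₁ h₂
  all_goals rw [Units.ext_iff, Units.val_mul, Units.val_one]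
  · rwa [← (inv_mul_eq_one₀ b.ne_zero).1 h₂] at h₁
  · rwa [← (inv_mul_eq_one₀ a.ne_zero).1 h₁, mul_comm] at h₂

lemma eq_or_eq_of_edge_cycle {v₀ v₁ v₂ v₃ : Vertex F} (h₀₁ : Edge v₀ v₁) (h₁₂ : Edge v₁ v₂)
    (h₂₃ : Edge v₂ v₃) (h₃₀ : Edge v₃ v₀) : v₀ = v₂ ∨ v₁ = v₃ := by
  rcases v₀ with a | a <;> rcases v₁ with b | b <;> rcases v₂ with c | c <;>
    rcases v₃ with d | d <;> simp only [Edge] at h₀₁ h₁₂ h₂₃ h₃₀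
  · simpa [Subtype.ext_iff] using eq_or_eq_of_dotProduct_eq_one h₀₁ h₁₂ h₂₃ h₃₀
  · simpa [Subtype.ext_iff, or_comm] using eq_or_eq_of_dotProduct_eq_one h₀₁ h₃₀ h₂₃ h₁₂

lemma scale_left_inj {a b : Fˣ} {v : Vertex F} : scale a v = scale b v ↔ a = b := by
  refine ⟨fun h => inv_mul_eq_one.1 ((scale_eq_self_iff (v := v)).1 ?_), by rintro rfl; rfl⟩
  rw [← scale_scale, ← h, scale_scale, inv_mul_cancel, scale_one]

lemma card_vertex [Finite F] : Nat.card (Vertex F) = 2 * Nat.card F ^ 2 - 2 := by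
  classical
  have := Fintype.ofFinite F
  rw [Nat.card_sum, Nat.card_eq_fintype_card, Fintype.card_subtype_compl, Nat.card_eq_fintype_card]
  simp
  omega

lemma card_edge [Finite F] (v : Vertex F) : Nat.card {w // Edge v w} = Nat.card F := by
  have hline {p : Fin 2 → F} (hp : p ≠ 0) :
      Nat.card {φ : {x : Fin 2 → F // x ≠ 0} // p ⬝ᵥ φ = 1} = Nat.card F := by
    have h := card_dotProduct_eq_mul_card hp 1
    rw [Nat.card_eq_fintype_card (α := Fin 2), Fintype.card_fin, sq,
      ← Nat.card_congr (Equiv.subtypeSubtypeEquivSubtype (p := (· ≠ 0))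
        fun {φ} (h : p ⬝ᵥ φ = 1) => by rintro rfl; simp at h)] at h
    exact Nat.eq_of_mul_eq_mul_right Nat.card_pos h
  rw [Nat.card_congr Equiv.subtypeSum, Nat.card_sum]
  rcases v with p | φ
  · simpa [Edge] using hline p.2
  · simpa [Edge, dotProduct_comm] using hline φ.2

variable {g : Fˣ} {k : ℕ}

lemma Arc.isLeft {v w : Vertex F} (h : Arc g k v w) : w.isLeft = v.isLeft := by
  obtain ⟨j, -, rfl⟩ := h
  exact isLeft_scale _ v

lemma card_arc (hg : k < orderOf g) (v : Vertex F) : Nat.card {w // Arc g k v w} = k := by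
  have hrange : {w | Arc g k v w} = (fun j => scale (g ^ j) v) '' Set.Icc 1 k := by
    ext w
    simp [Arc, eq_comm]
  have hinj : Set.InjOn (fun j => scale (g ^ j) v) (Set.Icc 1 k) := fun i hi j hj h =>
    pow_injOn_Iio_orderOf (lt_of_le_of_lt hi.2 hg) (lt_of_le_of_lt hj.2 hg) (scale_left_inj.1 h)
  calc Nat.card {w // Arc g k v w} = Nat.card ((fun j => scale (g ^ j) v) '' Set.Icc 1 k) := by
        rw [← hrange]; rfl
    _ = k := by rw [Nat.card_coe_set_eq, hinj.ncard_image, Set.ncard_Icc_nat]; omega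

lemma card_arc_in (hg : k < orderOf g) (v : Vertex F) : Nat.card {w // Arc g k w v} = k := by
  have h := card_arc (g := g⁻¹) (by rwa [orderOf_inv]) v
  simpa only [Arc, inv_pow, eq_scale_inv_iff] using h

lemma scale_pow_ne_self {J : ℕ} (hJ : J ≠ 0) (hg : J < orderOf g) (v : Vertex F) :
    scale (g ^ J) v ≠ v :=
  fun h => pow_ne_one_of_lt_orderOf hJ hg (scale_eq_self_iff.1 h)

lemma arc_irrefl (hg : k < orderOf g) (v : Vertex F) : ¬ Arc g k v v := by
  rintro ⟨j, ⟨hj, hjk⟩, h⟩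
  exact scale_pow_ne_self (by omega) (by omega) v h.symm

variable {v₀ v₁ v₂ v₃ : Vertex F}

lemma false_of_cycle_two (hg : 2 * k < orderOf g) (h₀₁ : Arc g k v₀ v₁)
    (h₁₀ : Arc g k v₁ v₀ ∨ Edge v₁ v₀) : False := by
  obtain ⟨i, ⟨hi, hik⟩, rfl⟩ := h₀₁
  rcases h₁₀ with ⟨j, ⟨hj, hjk⟩, h⟩ | h
  · rw [scale_scale, ← pow_add] at h
    exact scale_pow_ne_self (by omega) (by omega) v₀ h.symm
  · exact not_edge_scale _ _ h

lemma false_of_cycle_three_of_arc_of_edge (hg : k < orderOf g) (h₀₁ : Arc g k v₀ v₁)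
    (h₁₂ : Arc g k v₁ v₂ ∨ Edge v₁ v₂) (h₂₀ : Edge v₂ v₀) : False := by
  obtain ⟨i, ⟨hi, hik⟩, rfl⟩ := h₀₁
  rcases h₁₂ with ⟨j, -, rfl⟩ | h₁₂
  · rw [scale_scale] at h₂₀
    exact not_edge_scale _ _ h₂₀
  · have h := mul_eq_one_of_edge_scale h₁₂ (b := 1) (by rwa [scale_one])
    rw [mul_one] at h
    exact pow_ne_one_of_lt_orderOf (by omega) (by omega) h

lemma false_of_cycle_three (hg : 3 * k < orderOf g) (h₀₁ : Arc g k v₀ v₁ ∨ Edge v₀ v₁)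
    (h₁₂ : Arc g k v₁ v₂ ∨ Edge v₁ v₂) (h₂₀ : Arc g k v₂ v₀ ∨ Edge v₂ v₀) : False := by
  rcases h₀₁ with a₀₁ | e₀₁ <;> rcases h₁₂ with a₁₂ | e₁₂ <;> rcases h₂₀ with a₂₀ | e₂₀
  case inl.inl.inl =>
    obtain ⟨i, ⟨hi, hik⟩, rfl⟩ := a₀₁
    obtain ⟨j, ⟨hj, hjk⟩, rfl⟩ := a₁₂
    obtain ⟨l, ⟨hl, hlk⟩, h⟩ := a₂₀
    simp only [scale_scale, ← pow_add] at h
    exact scale_pow_ne_self (by omega) (by omega) v₀ h.symm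
  case inr.inr.inr => exact not_edge_of_isLeft_eq (e₀₁.isLeft_eq e₁₂).symm e₂₀
  -- in every other pattern some arc follows an edge: start the cycle at that arc
  all_goals first
    | exact false_of_cycle_three_of_arc_of_edge (by omega) ‹Arc g k v₀ v₁› (by tauto) e₂₀
    | exact false_of_cycle_three_of_arc_of_edge (by omega) ‹Arc g k v₁ v₂› (by tauto) e₀₁
    | exact false_of_cycle_three_of_arc_of_edge (by omega) ‹Arc g k v₂ v₀› (by tauto) e₁₂

lemma false_of_cycle_four_of_arc_of_edge (hg : 2 * k < orderOf g) (h₀₁ : Arc g k v₀ v₁)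
    (h₁₂ : Arc g k v₁ v₂ ∨ Edge v₁ v₂) (h₂₃ : Arc g k v₂ v₃ ∨ Edge v₂ v₃) (h₃₀ : Edge v₃ v₀) :
    False := by
  obtain ⟨i, ⟨hi, hik⟩, rfl⟩ := h₀₁
  rcases h₁₂ with ⟨j, ⟨hj, hjk⟩, rfl⟩ | e₁₂ <;> rcases h₂₃ with ⟨l, ⟨hl, hlk⟩, rfl⟩ | e₂₃
  · simp only [scale_scale] at h₃₀
    exact not_edge_scale _ _ h₃₀
  · rw [scale_scale, ← pow_add] at e₂₃
    have h := mul_eq_one_of_edge_scale e₂₃ (b := 1) (by rwa [scale_one])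
    rw [mul_one] at h
    exact pow_ne_one_of_lt_orderOf (by omega) (by omega) h
  · have h := mul_eq_one_of_edge_scale e₁₂ h₃₀
    rw [← pow_add] at h
    exact pow_ne_one_of_lt_orderOf (by omega) (by omega) h
  · exact not_edge_of_isLeft_eq ((e₁₂.isLeft_eq e₂₃).trans (isLeft_scale _ _)).symm h₃₀

lemma false_of_cycle_four (hg : 4 * k < orderOf g) (h₀₁ : Arc g k v₀ v₁ ∨ Edge v₀ v₁)
    (h₁₂ : Arc g k v₁ v₂ ∨ Edge v₁ v₂) (h₂₃ : Arc g k v₂ v₃ ∨ Edge v₂ v₃)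
    (h₃₀ : Arc g k v₃ v₀ ∨ Edge v₃ v₀) (h₀₂ : v₀ ≠ v₂) (h₁₃ : v₁ ≠ v₃) : False := by
  rcases h₀₁ with a₀₁ | e₀₁ <;> rcases h₁₂ with a₁₂ | e₁₂ <;> rcases h₂₃ with a₂₃ | e₂₃ <;>
    rcases h₃₀ with a₃₀ | e₃₀
  case inl.inl.inl.inl =>
    obtain ⟨i, ⟨hi, hik⟩, rfl⟩ := a₀₁
    obtain ⟨j, ⟨hj, hjk⟩, rfl⟩ := a₁₂
    obtain ⟨l, ⟨hl, hlk⟩, rfl⟩ := a₂₃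
    obtain ⟨m, ⟨hm, hmk⟩, h⟩ := a₃₀
    simp only [scale_scale, ← pow_add] at h
    exact scale_pow_ne_self (by omega) (by omega) v₀ h.symm
  case inr.inr.inr.inr => exact (eq_or_eq_of_edge_cycle e₀₁ e₁₂ e₂₃ e₃₀).elim h₀₂ h₁₃
  -- in every other pattern some arc follows an edge: start the cycle at that arc
  all_goals first
    | exact false_of_cycle_four_of_arc_of_edge (by omega) ‹Arc g k v₀ v₁› (by tauto) (by tauto) e₃₀
    | exact false_of_cycle_four_of_arc_of_edge (by omega) ‹Arc g k v₁ v₂› (by tauto) (by tauto) e₀₁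
    | exact false_of_cycle_four_of_arc_of_edge (by omega) ‹Arc g k v₂ v₃› (by tauto) (by tauto) e₁₂
    | exact false_of_cycle_four_of_arc_of_edge (by omega) ‹Arc g k v₃ v₀› (by tauto) (by tauto) e₂₃

theorem five_le_of_isMixedCycleIn [Finite F] (hg : 4 * k < orderOf g) {ℓ : ℕ}
    {f : ZMod ℓ → Vertex F} (hc : IsMixedCycleIn Edge (Arc g k) ℓ f) : 5 ≤ ℓ := by
  by_contra! hℓ
  interval_cases ℓ
  · exact not_injective_infinite_finite f hc.1 -- `ZMod 0 = ℤ`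
  · exact (hc.step 0).elim (arc_irrefl (by omega) _) (Edge.irrefl _)
  · rcases hc.arc_of_two with h | h
    · exact false_of_cycle_two (by omega) h (hc.step 1)
    · exact false_of_cycle_two (by omega) h (hc.step 0)
  · exact false_of_cycle_three (by omega) (hc.step 0) (hc.step 1) (hc.step 2)
  · exact false_of_cycle_four hg (hc.step 0) (hc.step 1) (hc.step 2) (hc.step 3)
      (hc.1.ne (by decide)) (hc.1.ne (by decide))

lemma exists_isMixedCycleIn_five (hk : 1 ≤ k) (hg : g ≠ 1) :
    ∃ f : ZMod 5 → Vertex F, IsMixedCycleIn Edge (Arc g k) 5 f := by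
  have hg₁ : (g : F) ≠ 1 := by rwa [Ne, Units.val_eq_one]
  have hg₂ : 1 - (g : F)⁻¹ ≠ 0 := by rwa [sub_ne_zero, ne_comm, Ne, inv_eq_one]
  let v₀ : Vertex F := .inl ⟨![1, 0], by simp⟩
  let v₁ : Vertex F := .inl ⟨![g, 0], by simp⟩
  let v₂ : Vertex F := .inr ⟨![(g : F)⁻¹, 1], by simp⟩
  let v₃ : Vertex F := .inl ⟨![1, 1 - (g : F)⁻¹], by simp⟩
  let v₄ : Vertex F := .inr ⟨![1, 0], by simp⟩
  have a₀₁ : Arc g k v₀ v₁ := ⟨1, ⟨le_rfl, hk⟩, congrArg Sum.inl <| Subtype.ext <| by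
    ext i; fin_cases i <;> simp [Units.smul_def]⟩
  have e₁₂ : Edge v₁ v₂ := by simp [v₁, v₂, Edge, dotProduct, Fin.sum_univ_two]
  have e₂₃ : Edge v₂ v₃ := by simp [v₂, v₃, Edge, dotProduct, Fin.sum_univ_two]
  have e₃₄ : Edge v₃ v₄ := by simp [v₃, v₄, Edge, dotProduct, Fin.sum_univ_two]
  have e₄₀ : Edge v₄ v₀ := by simp [v₄, v₀, Edge, dotProduct, Fin.sum_univ_two]
  refine ⟨![v₀, v₁, v₂, v₃, v₄], ?_, ![true, false, false, false, false], ?_, by decide⟩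
  · intro i j h
    fin_cases i <;> fin_cases j <;>
      first | rfl | simp [v₀, v₁, v₂, v₃, v₄, hg₁, hg₁.symm, hg₂, hg₂.symm] at h
  · intro t
    fin_cases t
    exacts [a₀₁, e₁₂, e₂₃, e₃₄, e₄₀]

theorem mem_mixedGraphOrders [Finite F] (hk : 1 ≤ k) (hg : 4 * k < orderOf g) :
    2 * Nat.card F ^ 2 - 2 ∈ MixedGraphOrders k (Nat.card F) 5 := by
  have hg₁ : g ≠ 1 := by
    rintro rfl
    rw [orderOf_one] at hg
    omega
  rw [← card_vertex]
  exact natCard_mem_mixedGraphOrders Edge (Arc g k) (fun _ _ => Edge.symm) Edge.irrefl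
    (arc_irrefl (by omega)) (fun _ _ h => not_edge_of_isLeft_eq h.2.isLeft h.1) card_edge
    (card_arc (by omega)) (card_arc_in (by omega)) (fun _ _ => five_le_of_isMixedCycleIn hg)
    (exists_isMixedCycleIn_five hk hg₁)

end SemiplaneGraph

theorem mixed_cage_upper_bound_general (q k R : ℕ) (hq : IsPrimePow q)
    (hk : 1 ≤ k) (hR1 : 1 ≤ R) (hqk : q - 1 = 4 * k + R) :
    (2 * q ^ 2 - 2) ∈ MixedGraphOrders k q 5 ∧
      sInf (MixedGraphOrders k q 5) ≤ 2 * q ^ 2 - 2 := by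
  obtain ⟨p, n, hp, hn, rfl⟩ := hq
  have : Fact p.Prime := ⟨Nat.prime_iff.2 hp⟩
  have hcard := GaloisField.card p n hn.ne'
  obtain ⟨g, hg⟩ := IsCyclic.exists_ofOrder_eq_natCard (α := (GaloisField p n)ˣ)
  have hord : 4 * k < orderOf g := by
    rw [hg, Nat.card_units, hcard]
    omega
  have hmem := hcard ▸ SemiplaneGraph.mem_mixedGraphOrders hk hord
  exact ⟨hmem, Nat.sInf_le hmem⟩

/-- For every prime power `q` with `q - 1 = 4k + R`, `R ∈ {1,…,5}`, `k ≥ 1`, there is a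
`[k,q;5]`-mixed graph on `2q² - 2` vertices, hence `n[k,q;5] ≤ 2q² - 2`. -/
theorem mixed_cage_upper_bound (q k R : ℕ) (hq : IsPrimePow q)
    (hk : 1 ≤ k) (hR1 : 1 ≤ R) (hR5 : R ≤ 5) (hqk : q - 1 = 4 * k + R) :
    (2 * q ^ 2 - 2) ∈ MixedGraphOrders k q 5 ∧
      sInf (MixedGraphOrders k q 5) ≤ 2 * q ^ 2 - 2 :=
  mixed_cage_upper_bound_general q k R hq hk hR1 hqk
end
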